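/- arXiv:1703.00881 — 3 statements merged into one kernel-verified Lean document; each statement's English description precedes it below -/
import Mathlib

section
/- Let α be a nonzero integer, 0 < β < α, and f : [0,∞) → ℂ continuous with ‖f‖_β = sup_{z≥0} |f(z)|e^{βz} < ∞. Define φ(z) = -(1/(2α)) ∫_0^∞ (e^{-α|x-z|} - e^{-α(x+z)}) f(x) dx (with α replaced by |α|). Then φ solves φ'' - α²φ = f on (0,∞) with φ(0) = 0, and there is a constant C independent of α such that α²‖φ‖_β + |α|·‖φ'‖_β + ‖φ''‖_β ≤ C ‖f‖_β. -/
open scoped ENNReal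
open MeasureTheory

/-- The weighted sup-norm `‖g‖_β = sup_{z ≥ 0} |g(z)| e^{βz}` (valued in `ℝ≥0∞`). -/
noncomputable def expNorm (β : ℝ) (g : ℝ → ℂ) : ℝ≥0∞ :=
  ⨆ z ∈ Set.Ici (0 : ℝ), ENNReal.ofReal (‖g z‖ * Real.exp (β * z))

/-!
Write `a = |α|` and `K = ∫₀^∞ e^{-ax} f(x) dx`. Splitting the integral at `x = z` shows that for
`z ≥ 0`
  `φ(z) = -(1/2a) (e^{-az} u(z) + e^{az} v(z))`,
  `u(z) = ∫₀^z e^{ax} f - K`,  `v(z) = ∫_z^∞ e^{-ax} f`,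
and since `u' = e^{az} f`, `v' = -e^{-az} f`, variation of parameters gives
`φ' = -(1/2)(-e^{-az} u + e^{az} v)` and `φ'' = f + a²φ`. For `z ≤ 0` one has
`φ(z) = -(1/a) sinh(az) K`, whose derivative at `0` is again `-K`, so `φ` is differentiable at `0`.

If `|f(x)| ≤ M e^{-βx}`, then `e^{-az}|u(z)| + e^{az}|v(z)| ≤ M e^{-βz} (1/(a-β) + 2/(a+β))`, which
is at most `6 M e^{-βz} / a` as soon as `2β < a`. Hence `a²‖φ‖_β ≤ 3M`, `a‖φ'‖_β ≤ 3M` and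
`‖φ''‖_β ≤ ‖f‖_β + a²‖φ‖_β ≤ 4M`, so `C = 10` works.
-/

open Real Set Filter Topology

section expNorm

variable {β : ℝ} {g : ℝ → ℂ}

theorem expNorm_le_ofReal {B : ℝ} (h : ∀ z, 0 ≤ z → ‖g z‖ * exp (β * z) ≤ B) :
    expNorm β g ≤ ENNReal.ofReal B :=
  iSup₂_le fun z hz => ENNReal.ofReal_le_ofReal (h z hz)

theorem ofReal_mul_expNorm_le {c B : ℝ} (hc : 0 < c)
    (h : ∀ z, 0 ≤ z → ‖g z‖ * exp (β * z) ≤ B / c) :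
    ENNReal.ofReal c * expNorm β g ≤ ENNReal.ofReal B :=
  calc ENNReal.ofReal c * expNorm β g ≤ ENNReal.ofReal c * ENNReal.ofReal (B / c) := by
        gcongr; exact expNorm_le_ofReal h
    _ = ENNReal.ofReal B := by rw [← ENNReal.ofReal_mul hc.le, mul_div_cancel₀ _ hc.ne']

theorem norm_le_toReal_expNorm_mul (hg : expNorm β g ≠ ⊤) {x : ℝ} (hx : 0 ≤ x) :
    ‖g x‖ ≤ (expNorm β g).toReal * exp (-β * x) := by
  have h : ‖g x‖ * exp (β * x) ≤ (expNorm β g).toReal :=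
    (ENNReal.ofReal_le_iff_le_toReal hg).1 (le_iSup₂_of_le (f := fun z (_ : z ∈ Ici 0) =>
      ENNReal.ofReal (‖g z‖ * exp (β * z))) x hx le_rfl)
  calc ‖g x‖ = ‖g x‖ * exp (β * x) * exp (-β * x) := by
        rw [mul_assoc, ← exp_add, neg_mul, add_neg_cancel, exp_zero, mul_one]
    _ ≤ (expNorm β g).toReal * exp (-β * x) := by gcongr

end expNorm

section Calculus

variable {F : Type*} [NormedAddCommGroup F] [NormedSpace ℝ F]

theorem hasDerivAt_of_eqOn_Iic_of_eqOn_Ici {φ g h : ℝ → F} {x : ℝ} {d : F}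
    (hg : HasDerivAt g d x) (hh : HasDerivAt h d x) (hφg : EqOn φ g (Iic x))
    (hφh : EqOn φ h (Ici x)) : HasDerivAt φ d x := by
  have := (hg.hasDerivWithinAt.congr hφg (hφg self_mem_Iic)).union
    (hh.hasDerivWithinAt.congr hφh (hφh self_mem_Ici))
  rwa [Iic_union_Ici, hasDerivWithinAt_univ] at this

theorem norm_deriv_le_of_hasDerivWithinAt {g : ℝ → F} {g' : F} {s : Set ℝ} {x : ℝ}
    (h : HasDerivWithinAt g g' s x) (hs : UniqueDiffWithinAt ℝ s x) : ‖deriv g x‖ ≤ ‖g'‖ := by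
  by_cases hd : DifferentiableAt ℝ g x
  · rw [← hd.derivWithin hs, h.derivWithin hs]
  · rw [deriv_zero_of_not_differentiableAt hd, norm_zero]
    exact norm_nonneg _

end Calculus

namespace HalfLineDirichlet

variable {E : Type*} [NormedAddCommGroup E] [NormedSpace ℝ E]

section Definitions

variable (a : ℝ) (f : ℝ → E)

noncomputable def laplace : E := ∫ x in Ioi 0, exp (-a * x) • f x

noncomputable def expPrimitive (z : ℝ) : E := ∫ x in (0 : ℝ)..z, exp (a * x) • f x

noncomputable def expCombo (u v : ℝ → E) (z : ℝ) : E :=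
  exp (-a * z) • u z + exp (a * z) • v z

noncomputable def decayingCoeff (z : ℝ) : E := expPrimitive a f z - laplace a f

noncomputable def growingCoeff (z : ℝ) : E := laplace a f - expPrimitive (-a) f z

noncomputable def solution (z : ℝ) : E :=
  (-(1 / (2 * a)) : ℝ) • ∫ x in Ioi 0, (exp (-a * |x - z|) - exp (-a * (x + z))) • f x

end Definitions

@[simp] theorem expPrimitive_zero (c : ℝ) (f : ℝ → E) : expPrimitive c f 0 = 0 :=
  intervalIntegral.integral_same

section VariationOfParameters

variable {a : ℝ} {f : ℝ → E} {u v : ℝ → E}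

theorem expCombo_zero (a : ℝ) (u v : ℝ → E) : expCombo a u v 0 = u 0 + v 0 := by
  simp [expCombo]

theorem norm_expCombo_le (a : ℝ) (u v : ℝ → E) (z : ℝ) :
    ‖expCombo a u v z‖ ≤ exp (-a * z) * ‖u z‖ + exp (a * z) * ‖v z‖ := by
  refine (norm_add_le _ _).trans_eq ?_
  rw [norm_smul, norm_smul, norm_of_nonneg (exp_pos _).le, norm_of_nonneg (exp_pos _).le]

theorem hasDerivAt_expCombo {g h : E} {z : ℝ} (hu : HasDerivAt u (exp (a * z) • g) z)
    (hv : HasDerivAt v (-(exp (-a * z) • h)) z) :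
    HasDerivAt (expCombo a u v) (a • expCombo a (-u) v z + (g - h)) z := by
  have hexp (c : ℝ) : HasDerivAt (fun z => exp (c * z)) (c * exp (c * z)) z := by
    simpa [mul_comm] using ((hasDerivAt_id z).const_mul c).exp
  refine (((hexp (-a)).smul hu).add ((hexp a).smul hv)).congr_deriv ?_
  have hcancel : exp (-a * z) * exp (a * z) = 1 := by rw [← exp_add]; simp
  simp only [expCombo, Pi.neg_apply, smul_neg, smul_smul, hcancel, mul_comm (exp (a * z)),
    one_smul]
  module

theorem hasDerivAt_smul_expCombo (ha : a ≠ 0) (hu : ∀ z, HasDerivAt u (exp (a * z) • f z) z)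
    (hv : ∀ z, HasDerivAt v (-(exp (-a * z) • f z)) z) (z : ℝ) :
    HasDerivAt (fun z => (-(1 / (2 * a)) : ℝ) • expCombo a u v z)
      ((-(1 / 2) : ℝ) • expCombo a (-u) v z) z := by
  refine ((hasDerivAt_expCombo (hu z) (hv z)).const_smul (-(1 / (2 * a)) : ℝ)).congr_deriv ?_
  rw [sub_self, add_zero, smul_smul]
  congr 1
  field_simp

theorem hasDerivAt_smul_expCombo_neg (ha : a ≠ 0)
    (hu : ∀ z, HasDerivAt u (exp (a * z) • f z) z)
    (hv : ∀ z, HasDerivAt v (-(exp (-a * z) • f z)) z) (z : ℝ) :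
    HasDerivAt (fun z => (-(1 / 2) : ℝ) • expCombo a (-u) v z)
      (f z + a ^ 2 • (-(1 / (2 * a)) : ℝ) • expCombo a u v z) z := by
  have hu' : HasDerivAt (-u) (exp (a * z) • -f z) z := by simpa using (hu z).neg
  refine ((hasDerivAt_expCombo hu' (hv z)).const_smul (-(1 / 2) : ℝ)).congr_deriv ?_
  rw [neg_neg, smul_smul, smul_add, smul_smul]
  have : a ^ 2 * -(1 / (2 * a)) = -(1 / 2) * a := by field_simp
  rw [this]
  module

end VariationOfParameters

section Representation

variable {a : ℝ} {f : ℝ → E}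

theorem setIntegral_Ioi_eq_growingCoeff
    (hK : IntegrableOn (fun x => exp (-a * x) • f x) (Ioi 0)) {z : ℝ} (hz : 0 ≤ z) :
    ∫ x in Ioi z, exp (-a * x) • f x = growingCoeff a f z := by
  rw [growingCoeff, laplace, expPrimitive, ← intervalIntegral.integral_Ioi_sub_Ioi hK hz,
    sub_sub_cancel]

theorem integral_kernel_smul_of_nonneg (hf : Continuous f)
    (hK : IntegrableOn (fun x => exp (-a * x) • f x) (Ioi 0)) {z : ℝ} (hz : 0 ≤ z) :
    ∫ x in Ioi 0, (exp (-a * |x - z|) - exp (-a * (x + z))) • f x =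
      expCombo a (decayingCoeff a f) (growingCoeff a f) z := by
  have hleft : ∀ x ∈ Ioc 0 z, (exp (-a * |x - z|) - exp (-a * (x + z))) • f x =
      exp (-a * z) • (exp (a * x) • f x - exp (-a * x) • f x) := fun x hx => by
    rw [abs_of_nonpos (by linarith [hx.2]), smul_sub, smul_smul, smul_smul, ← exp_add, ← exp_add,
      sub_smul]
    ring_nf
  have hright : EqOn (fun x => (exp (-a * |x - z|) - exp (-a * (x + z))) • f x)
      (fun x => (exp (a * z) - exp (-a * z)) • exp (-a * x) • f x) (Ioi z) := fun x hx => by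
    simp only
    rw [abs_of_nonneg (by linarith [hx.out]), smul_smul, sub_mul, ← exp_add, ← exp_add]
    ring_nf
  have hKz : IntegrableOn (fun x => (exp (a * z) - exp (-a * z)) • exp (-a * x) • f x) (Ioi z) :=
    (hK.mono_set (Ioi_subset_Ioi hz)).smul _
  have hcont (c : ℝ) : Continuous fun x => exp (c * x) • f x := by fun_prop
  rw [← intervalIntegral.integral_interval_add_Ioi'
      ((by fun_prop : Continuous fun x => (exp (-a * |x - z|) - exp (-a * (x + z))) • f x)
        |>.intervalIntegrable 0 z)
      (hKz.congr_fun hright.symm measurableSet_Ioi),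
    intervalIntegral.integral_congr_ae (Eventually.of_forall fun x hx =>
      hleft x (by rwa [uIoc_of_le hz] at hx)),
    setIntegral_congr_fun measurableSet_Ioi hright, intervalIntegral.integral_smul,
    intervalIntegral.integral_sub ((hcont a).intervalIntegrable 0 z)
      ((hcont (-a)).intervalIntegrable 0 z),
    integral_smul, setIntegral_Ioi_eq_growingCoeff hK hz]
  simp only [expCombo, decayingCoeff, growingCoeff, expPrimitive]
  module

theorem solution_of_nonneg (hf : Continuous f)
    (hK : IntegrableOn (fun x => exp (-a * x) • f x) (Ioi 0)) {z : ℝ} (hz : 0 ≤ z) :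
    solution a f z =
      (-(1 / (2 * a)) : ℝ) • expCombo a (decayingCoeff a f) (growingCoeff a f) z := by
  rw [solution, integral_kernel_smul_of_nonneg hf hK hz]

theorem solution_of_nonpos {z : ℝ} (hz : z ≤ 0) :
    solution a f z =
      (-(1 / (2 * a)) : ℝ) • expCombo a (fun _ => -laplace a f) (fun _ => laplace a f) z := by
  have hkernel : ∀ x ∈ Ioi (0 : ℝ), (exp (-a * |x - z|) - exp (-a * (x + z))) • f x =
      (exp (a * z) - exp (-a * z)) • exp (-a * x) • f x := fun x hx => by
    rw [abs_of_nonneg (by linarith [hx.out]), smul_smul, sub_mul, ← exp_add, ← exp_add]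
    ring_nf
  rw [solution, setIntegral_congr_fun measurableSet_Ioi hkernel, integral_smul, expCombo, laplace]
  module

theorem solution_zero (a : ℝ) (f : ℝ → E) : solution a f 0 = 0 := by
  rw [solution_of_nonpos le_rfl, expCombo_zero, neg_add_cancel, smul_zero]

end Representation

section Derivatives

variable [CompleteSpace E] {a : ℝ} {f : ℝ → E}

theorem hasDerivAt_expPrimitive (hf : Continuous f) (c z : ℝ) :
    HasDerivAt (expPrimitive c f) (exp (c * z) • f z) z :=
  ((by fun_prop : Continuous fun x => exp (c * x) • f x).integral_hasStrictDerivAt 0 z).hasDerivAt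

theorem hasDerivAt_decayingCoeff (hf : Continuous f) (z : ℝ) :
    HasDerivAt (decayingCoeff a f) (exp (a * z) • f z) z :=
  (hasDerivAt_expPrimitive hf a z).sub_const _

theorem hasDerivAt_growingCoeff (hf : Continuous f) (z : ℝ) :
    HasDerivAt (growingCoeff a f) (-(exp (-a * z) • f z)) z :=
  (hasDerivAt_expPrimitive hf (-a) z).const_sub _

variable (hf : Continuous f) (hK : IntegrableOn (fun x => exp (-a * x) • f x) (Ioi 0))
  (ha : a ≠ 0)
include hf hK ha

theorem hasDerivAt_solution {z : ℝ} (hz : 0 ≤ z) :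
    HasDerivAt (solution a f)
      ((-(1 / 2) : ℝ) • expCombo a (-decayingCoeff a f) (growingCoeff a f) z) z := by
  have hright :=
    hasDerivAt_smul_expCombo ha (hasDerivAt_decayingCoeff hf) (hasDerivAt_growingCoeff hf)
  rcases hz.eq_or_lt with rfl | hz
  · -- `deriv` at `0` is two-sided, so the branch on `z ≤ 0` has to be glued in.
    have hleft := hasDerivAt_smul_expCombo (f := 0) (u := fun _ => -laplace a f)
      (v := fun _ => laplace a f) ha (fun z => by simpa using hasDerivAt_const z _)
      (fun z => by simpa using hasDerivAt_const z _) 0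
    refine hasDerivAt_of_eqOn_Iic_of_eqOn_Ici (hleft.congr_deriv ?_) (hright 0)
      (fun z hz => solution_of_nonpos hz) (fun z hz => solution_of_nonneg hf hK hz)
    simp [expCombo_zero, expPrimitive_zero, decayingCoeff, growingCoeff]
  · exact (hright z).congr_of_eventuallyEq
      (eventually_of_mem (Ioi_mem_nhds hz) fun y hy => solution_of_nonneg hf hK hy.out.le)

theorem hasDerivWithinAt_deriv_solution {z : ℝ} (hz : 0 ≤ z) :
    HasDerivWithinAt (deriv (solution a f)) (f z + a ^ 2 • solution a f z) (Ici 0) z := by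
  have hderiv : EqOn (deriv (solution a f))
      (fun z => (-(1 / 2) : ℝ) • expCombo a (-decayingCoeff a f) (growingCoeff a f) z) (Ici 0) :=
    fun z hz => (hasDerivAt_solution hf hK ha hz).deriv
  rw [solution_of_nonneg hf hK hz]
  exact (hasDerivAt_smul_expCombo_neg ha (hasDerivAt_decayingCoeff hf)
    (hasDerivAt_growingCoeff hf) z).hasDerivWithinAt.congr hderiv (hderiv hz)

theorem deriv_deriv_solution {z : ℝ} (hz : 0 < z) :
    deriv (deriv (solution a f)) z = f z + a ^ 2 • solution a f z :=
  ((hasDerivWithinAt_deriv_solution hf hK ha hz.le).hasDerivAt (Ici_mem_nhds hz)).deriv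

end Derivatives

section Bounds

variable {a β M : ℝ} {f : ℝ → E} (hb : ∀ x, 0 ≤ x → ‖f x‖ ≤ M * exp (-β * x))
include hb

theorem norm_exp_mul_smul_le (c : ℝ) {x : ℝ} (hx : 0 ≤ x) :
    ‖exp (c * x) • f x‖ ≤ M * exp ((c - β) * x) := by
  rw [norm_smul, norm_of_nonneg (exp_pos _).le, sub_mul, sub_eq_add_neg, exp_add, ← neg_mul]
  nlinarith [hb x hx, exp_pos (c * x)]

theorem integrableOn_exp_mul_smul (hf : Continuous f) (h : 0 < a + β) :
    IntegrableOn (fun x => exp (-a * x) • f x) (Ioi 0) :=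
  ((integrableOn_exp_mul_Ioi (by linarith) 0).const_mul M).mono'
    (by fun_prop : Continuous fun x => exp (-a * x) • f x).aestronglyMeasurable.restrict
    ((ae_restrict_mem measurableSet_Ioi).mono fun x hx => norm_exp_mul_smul_le hb (-a) hx.out.le)

theorem norm_setIntegral_Ioi_le (h : 0 < a + β) {z : ℝ} (hz : 0 ≤ z) :
    ‖∫ x in Ioi z, exp (-a * x) • f x‖ ≤ M * exp ((-a - β) * z) / (a + β) := by
  have hint := (integrableOn_exp_mul_Ioi (by linarith : -a - β < 0) z).const_mul M
  refine (norm_integral_le_of_norm_le hint ((ae_restrict_mem measurableSet_Ioi).mono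
    fun x hx => norm_exp_mul_smul_le hb (-a) (hz.trans hx.out.le))).trans_eq ?_
  rw [integral_const_mul, integral_exp_mul_Ioi (by linarith), neg_div, ← div_neg, neg_sub',
    neg_neg, sub_neg_eq_add, mul_div_assoc]

theorem norm_expPrimitive_le (h : β < a) {z : ℝ} (hz : 0 ≤ z) :
    ‖expPrimitive a f z‖ ≤ M * exp ((a - β) * z) / (a - β) := by
  have hab : 0 < a - β := by linarith
  have hM : 0 ≤ M := (norm_nonneg _).trans (by simpa using hb 0 le_rfl)
  have hcont : Continuous fun x => M * exp ((a - β) * x) := by fun_prop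
  refine (intervalIntegral.norm_integral_le_of_norm_le hz (Eventually.of_forall fun x hx =>
    norm_exp_mul_smul_le hb a hx.1.le) (hcont.intervalIntegrable 0 z)).trans ?_
  rw [intervalIntegral.integral_const_mul, intervalIntegral.integral_comp_mul_left
    (fun x => exp x) hab.ne', integral_exp, smul_eq_mul, mul_zero, exp_zero, ← div_eq_inv_mul,
    mul_div_assoc]
  gcongr
  linarith

variable (hf : Continuous f) (hβ : 0 ≤ β) (ha : 2 * β < a)
include hf hβ ha

theorem weighted_norm_coeffs_le {z : ℝ} (hz : 0 ≤ z) :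
    (exp (-a * z) * ‖decayingCoeff a f z‖ + exp (a * z) * ‖growingCoeff a f z‖) * exp (β * z) ≤
      6 * M / a := by
  have hM : 0 ≤ M := (norm_nonneg _).trans (by simpa using hb 0 le_rfl)
  have ha0 : 0 < a := by linarith
  have hF := norm_expPrimitive_le hb (a := a) (by linarith) hz
  have hG := norm_setIntegral_Ioi_le hb (a := a) (by linarith) hz
  have hL := norm_setIntegral_Ioi_le hb (a := a) (by linarith) le_rfl
  rw [setIntegral_Ioi_eq_growingCoeff (integrableOn_exp_mul_smul hb hf (by linarith)) hz] at hG
  rw [mul_zero, exp_zero, mul_one] at hL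
  have e1 : exp (-a * z) * exp ((a - β) * z) * exp (β * z) = 1 := by
    rw [← exp_add, ← exp_add, show -a * z + (a - β) * z + β * z = 0 by ring, exp_zero]
  have e2 : exp (a * z) * exp ((-a - β) * z) * exp (β * z) = 1 := by
    rw [← exp_add, ← exp_add, show a * z + (-a - β) * z + β * z = 0 by ring, exp_zero]
  have e3 : exp (-a * z) * exp (β * z) ≤ 1 := by
    rw [← exp_add, exp_le_one_iff]
    nlinarith
  have hminus : M / (a - β) ≤ 2 * M / a := by
    rw [div_le_div_iff₀ (by linarith) ha0]; nlinarith
  have hplus : M / (a + β) ≤ 2 * M / a := by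
    rw [div_le_div_iff₀ (by linarith) ha0]; nlinarith
  calc (exp (-a * z) * ‖decayingCoeff a f z‖ + exp (a * z) * ‖growingCoeff a f z‖) * exp (β * z)
      ≤ (exp (-a * z) * (M * exp ((a - β) * z) / (a - β) + M / (a + β)) +
          exp (a * z) * (M * exp ((-a - β) * z) / (a + β))) * exp (β * z) := by
        gcongr
        exact (norm_sub_le _ _).trans (add_le_add hF hL)
    _ = M / (a - β) * (exp (-a * z) * exp ((a - β) * z) * exp (β * z)) +
          M / (a + β) * (exp (-a * z) * exp (β * z)) +
          M / (a + β) * (exp (a * z) * exp ((-a - β) * z) * exp (β * z)) := by ring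
    _ ≤ 2 * M / a + 2 * M / a * 1 + 2 * M / a := by
        rw [e1, e2, mul_one, mul_one]
        exact add_le_add (add_le_add hminus (mul_le_mul hplus e3 (by positivity) (by positivity)))
          hplus
    _ = 6 * M / a := by ring

theorem norm_solution_mul_exp_le {z : ℝ} (hz : 0 ≤ z) :
    ‖solution a f z‖ * exp (β * z) ≤ 3 * M / a ^ 2 := by
  have ha0 : 0 < a := by linarith
  rw [solution_of_nonneg hf (integrableOn_exp_mul_smul hb hf (by linarith)) hz, norm_smul,
    norm_neg, norm_of_nonneg (by positivity), mul_assoc]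
  calc 1 / (2 * a) * (‖expCombo a (decayingCoeff a f) (growingCoeff a f) z‖ * exp (β * z))
      ≤ 1 / (2 * a) * (6 * M / a) := by
        gcongr
        exact (mul_le_mul_of_nonneg_right (norm_expCombo_le a _ _ z) (exp_pos _).le).trans
          (weighted_norm_coeffs_le hb hf hβ ha hz)
    _ = 3 * M / a ^ 2 := by field_simp; ring

variable [CompleteSpace E]

theorem norm_deriv_solution_mul_exp_le {z : ℝ} (hz : 0 ≤ z) :
    ‖deriv (solution a f) z‖ * exp (β * z) ≤ 3 * M / a := by
  have ha0 : 0 < a := by linarith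
  rw [(hasDerivAt_solution hf (integrableOn_exp_mul_smul hb hf (by linarith)) ha0.ne' hz).deriv,
    norm_smul, norm_neg, norm_of_nonneg (by positivity), mul_assoc]
  have hcombo := norm_expCombo_le a (-decayingCoeff a f) (growingCoeff a f) z
  rw [Pi.neg_apply, norm_neg] at hcombo
  calc 1 / 2 * (‖expCombo a (-decayingCoeff a f) (growingCoeff a f) z‖ * exp (β * z))
      ≤ 1 / 2 * (6 * M / a) := by
        gcongr
        exact (mul_le_mul_of_nonneg_right hcombo (exp_pos _).le).trans
          (weighted_norm_coeffs_le hb hf hβ ha hz)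
    _ = 3 * M / a := by ring

theorem norm_deriv_deriv_solution_mul_exp_le {z : ℝ} (hz : 0 ≤ z) :
    ‖deriv (deriv (solution a f)) z‖ * exp (β * z) ≤ 4 * M := by
  have ha0 : 0 < a := by linarith
  have hderiv := norm_deriv_le_of_hasDerivWithinAt (hasDerivWithinAt_deriv_solution hf
    (integrableOn_exp_mul_smul hb hf (by linarith)) ha0.ne' hz) (uniqueDiffOn_Ici 0 z hz)
  have hsol := norm_solution_mul_exp_le hb hf hβ ha hz
  have hfz : ‖f z‖ * exp (β * z) ≤ M := by
    calc ‖f z‖ * exp (β * z) ≤ M * exp (-β * z) * exp (β * z) := by gcongr; exact hb z hz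
      _ = M := by rw [mul_assoc, ← exp_add, neg_mul, neg_add_cancel, exp_zero, mul_one]
  calc ‖deriv (deriv (solution a f)) z‖ * exp (β * z)
      ≤ (‖f z‖ + a ^ 2 * ‖solution a f z‖) * exp (β * z) := by
        gcongr
        refine hderiv.trans ((norm_add_le _ _).trans_eq ?_)
        rw [norm_smul, norm_of_nonneg (by positivity)]
    _ = ‖f z‖ * exp (β * z) + a ^ 2 * (‖solution a f z‖ * exp (β * z)) := by ring
    _ ≤ M + a ^ 2 * (3 * M / a ^ 2) := by gcongr
    _ = 4 * M := by field_simp; ring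

end Bounds

end HalfLineDirichlet

open HalfLineDirichlet

/-- Inversion of `∂_z² - α²` on the half line with Dirichlet condition, in the
spaces `𝒜^β` with no boundary layer: for `0 < β < 1/2` there is a constant `C`
independent of the nonzero integer `α` such that, for continuous `f` with
`‖f‖_β < ∞`, the explicit solution
`φ(z) = -(1/(2|α|)) ∫₀^∞ (e^{-|α||x-z|} - e^{-|α|(x+z)}) f(x) dx`
satisfies `φ(0) = 0`, solves `φ'' - α²φ = f` on `(0,∞)`, and
`α²‖φ‖_β + |α|‖φ'‖_β + ‖φ''‖_β ≤ C‖f‖_β`. -/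
theorem laplace_inverse_Abeta (β : ℝ) (hβ0 : 0 < β) (hβ : β < 1/2) :
    ∃ C : ℝ, 0 < C ∧ ∀ (α : ℤ), α ≠ 0 → ∀ f : ℝ → ℂ, Continuous f →
      expNorm β f < ⊤ →
      ∀ φ : ℝ → ℂ,
        (φ = fun z => -(1 / (2 * |(α : ℝ)|) : ℝ) •
          ∫ x in Set.Ioi (0 : ℝ),
            (Real.exp (-|(α : ℝ)| * |x - z|) - Real.exp (-|(α : ℝ)| * (x + z))) • f x) →
        φ 0 = 0 ∧
        (∀ z ∈ Set.Ioi (0 : ℝ), deriv (deriv φ) z - (α : ℂ)^2 * φ z = f z) ∧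
        ENNReal.ofReal ((α : ℝ)^2) * expNorm β φ
          + ENNReal.ofReal |(α : ℝ)| * expNorm β (deriv φ)
          + expNorm β (deriv (deriv φ))
          ≤ ENNReal.ofReal C * expNorm β f := by
  refine ⟨10, by norm_num, fun α hα f hf hfin φ hφ => ?_⟩
  obtain rfl : φ = solution |(α : ℝ)| f := hφ
  have ha : 2 * β < |(α : ℝ)| := by
    have : (1 : ℝ) ≤ |(α : ℝ)| := by rw [← Int.cast_abs]; exact_mod_cast Int.one_le_abs hα
    linarith
  set M := (expNorm β f).toReal
  have hb : ∀ x, 0 ≤ x → ‖f x‖ ≤ M * exp (-β * x) := fun x hx =>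
    norm_le_toReal_expNorm_mul hfin.ne hx
  have hsq : (α : ℝ) ^ 2 = |(α : ℝ)| ^ 2 := (sq_abs _).symm
  refine ⟨solution_zero _ f, fun z hz => ?_, ?_⟩
  · rw [deriv_deriv_solution hf (integrableOn_exp_mul_smul hb hf (by linarith)) (by linarith) hz,
      Complex.real_smul, ← hsq]
    push_cast
    ring
  calc _ ≤ ENNReal.ofReal (3 * M) + ENNReal.ofReal (3 * M) + ENNReal.ofReal (4 * M) := by
        gcongr
        · rw [hsq]
          exact ofReal_mul_expNorm_le (by positivity) fun z hz =>
            norm_solution_mul_exp_le hb hf hβ0.le ha hz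
        · exact ofReal_mul_expNorm_le (by linarith) fun z hz =>
            norm_deriv_solution_mul_exp_le hb hf hβ0.le ha hz
        · exact expNorm_le_ofReal fun z hz =>
            norm_deriv_deriv_solution_mul_exp_le hb hf hβ0.le ha hz
    _ = ENNReal.ofReal 10 * ENNReal.ofReal M := by
        rw [← ENNReal.ofReal_add (by positivity) (by positivity),
          ← ENNReal.ofReal_add (by positivity) (by positivity), ← ENNReal.ofReal_mul (by norm_num)]
        ring_nf
    _ = ENNReal.ofReal 10 * expNorm β f := by rw [ENNReal.ofReal_toReal hfin.ne]
end

section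
/- Let α be a nonzero integer, β ∈ (0, 1/2), δ > 0, P > 1, and f : [0,∞) → ℂ with |f(z)| ≤ M e^{-βz}(1 + δ^{-1} φ_P(δ^{-1}z)) for all z ≥ 0, where φ_P(z) = 1/(1+z^P). Let φ(z) = -(1/(2|α|)) ∫_0^∞ (e^{-|α||x-z|} - e^{-|α|(x+z)}) f(x) dx be the solution of φ'' - α²φ = f with φ(0)=0 decaying at infinity. Then there is a constant C, independent of α and δ, with |α| sup_{z≥0}|φ(z)|e^{βz} + sup_{z≥0}|φ'(z)|e^{βz} ≤ C M. -/
open MeasureTheory Set Real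

/-!
For `x, z ≥ 0` the Green kernel `e^{-a|x-z|} - e^{-a(x+z)}` lies between `0` and `e^{-a|x-z|}`,
and its `z`-derivative off the diagonal is bounded by `2a e^{-a|x-z|}`; differentiating under the
integral sign is justified because the kernel is Lipschitz in `z`. Both estimates thus reduce to
bounding `∫₀^∞ e^{-a|x-z|} e^{-βx} (1 + δ⁻¹ φ_P(x/δ)) dx`. Since
`e^{-a|x-z|} e^{-βx} ≤ e^{-βz} e^{-(a-β)|x-z|}`, the first part contributes at most
`e^{-βz} · 2/(a-β) ≤ 4 e^{-βz}` (as `a = |α| ≥ 1 > 2β`), and the boundary-layer part at most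
`e^{-βz} ∫₀^∞ φ_P`, which is finite because `P > 1` and independent of `δ` by scaling.
-/

lemma Real.abs_exp_sub_exp_le {u v c : ℝ} (hu : u ≤ c) (hv : v ≤ c) :
    |exp u - exp v| ≤ exp c * |u - v| := by
  wlog huv : v ≤ u generalizing u v
  · rw [abs_sub_comm, abs_sub_comm u]; exact this hv hu (le_of_not_ge huv)
  have hsub : exp u - exp v = exp u * (1 - exp (-(u - v))) := by
    rw [mul_sub, ← exp_add]; ring_nf
  rw [hsub, abs_of_nonneg (mul_nonneg (exp_pos u).le (by simp [huv])),
    abs_of_nonneg (sub_nonneg.2 huv)]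
  exact mul_le_mul (exp_le_exp.2 hu) (by linarith [one_sub_le_exp_neg (u - v)])
    (by simp [huv]) (exp_pos c).le

lemma Real.measurable_sign : Measurable Real.sign :=
  Measurable.ite measurableSet_Iio measurable_const
    (Measurable.ite measurableSet_Ioi measurable_const measurable_const)

namespace HalfLineGreen

noncomputable def phiP (P y : ℝ) : ℝ := (1 + y ^ P)⁻¹

variable {P : ℝ}

lemma phiP_pos {y : ℝ} (hy : 0 ≤ y) : 0 < phiP P y :=
  inv_pos.2 (by positivity)

lemma phiP_le_one {y : ℝ} (hy : 0 ≤ y) : phiP P y ≤ 1 :=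
  inv_le_one_of_one_le₀ (le_add_of_nonneg_right (rpow_nonneg hy P))

lemma phiP_le_rpow_neg {y : ℝ} (hy : 0 < y) : phiP P y ≤ y ^ (-P) := by
  rw [rpow_neg hy.le]
  exact inv_anti₀ (rpow_pos_of_pos hy P) (le_add_of_nonneg_left zero_le_one)

lemma measurable_phiP : Measurable (phiP P) :=
  (measurable_const.add (measurable_id.pow_const P)).inv

lemma integrableOn_phiP (hP : 1 < P) : IntegrableOn (phiP P) (Ioi 0) := by
  have h₀ : IntegrableOn (phiP P) (Ioc 0 1) :=
    Measure.integrableOn_of_bounded measure_Ioc_lt_top.ne measurable_phiP.aestronglyMeasurable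
      ((ae_restrict_iff' measurableSet_Ioc).2 <| .of_forall fun y hy => by
        rw [norm_of_nonneg (phiP_pos hy.1.le).le]; exact phiP_le_one hy.1.le)
  have h₁ : IntegrableOn (phiP P) (Ioi 1) :=
    (integrableOn_Ioi_rpow_of_lt (by linarith : -P < -1) zero_lt_one).mono'
      measurable_phiP.aestronglyMeasurable
      ((ae_restrict_iff' measurableSet_Ioi).2 <| .of_forall fun y hy => by
        have hy : (0:ℝ) < y := zero_lt_one.trans hy
        rw [norm_of_nonneg (phiP_pos hy.le).le]; exact phiP_le_rpow_neg hy)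
  simpa using h₀.union h₁

lemma integrableOn_phiP_div (hP : 1 < P) {δ : ℝ} (hδ : 0 < δ) :
    IntegrableOn (fun x => phiP P (x / δ)) (Ioi 0) := by
  simp_rw [div_eq_mul_inv]
  exact (integrableOn_Ioi_comp_mul_right_iff _ 0 (inv_pos.2 hδ)).2
    (by simpa using integrableOn_phiP hP)

lemma integral_inv_mul_phiP_div {δ : ℝ} (hδ : 0 < δ) :
    ∫ x in Ioi 0, δ⁻¹ * phiP P (x / δ) = ∫ y in Ioi 0, phiP P y := by
  simp_rw [integral_const_mul, div_eq_mul_inv, integral_comp_mul_right_Ioi _ 0 (inv_pos.2 hδ),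
    zero_mul, inv_inv, smul_eq_mul, inv_mul_cancel_left₀ hδ.ne']

lemma setIntegral_phiP_nonneg : 0 ≤ ∫ y in Ioi 0, phiP P y :=
  setIntegral_nonneg measurableSet_Ioi fun _ hy => (phiP_pos (mem_Ioi.1 hy).le).le

section ExpKernel

variable {c : ℝ}

lemma integral_exp_neg_mul_abs (hc : 0 < c) : ∫ x, exp (-c * |x|) = 2 / c := by
  rw [integral_comp_abs (f := fun x => exp (-c * x)), integral_exp_mul_Ioi (neg_neg_of_pos hc)]
  field_simp
  simp

lemma integrable_exp_neg_mul_abs (hc : 0 < c) : Integrable fun x => exp (-c * |x|) :=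
  .of_integral_ne_zero (by rw [integral_exp_neg_mul_abs hc]; positivity)

lemma integrable_exp_neg_mul_abs_sub (hc : 0 < c) (w : ℝ) :
    Integrable fun x => exp (-c * |x - w|) :=
  (integrable_exp_neg_mul_abs hc).comp_sub_right w

lemma setIntegral_exp_neg_mul_abs_sub_le (hc : 0 < c) (w : ℝ) :
    ∫ x in Ioi 0, exp (-c * |x - w|) ≤ 2 / c := by
  calc ∫ x in Ioi 0, exp (-c * |x - w|) ≤ ∫ x, exp (-c * |x - w|) :=
        setIntegral_le_integral (integrable_exp_neg_mul_abs_sub hc w)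
          (.of_forall fun _ => (exp_pos _).le)
    _ = 2 / c := by
        rw [integral_sub_right_eq_self (fun x => exp (-c * |x|)), integral_exp_neg_mul_abs hc]

end ExpKernel

noncomputable def layerWeight (β δ P x : ℝ) : ℝ :=
  exp (-β * x) * (1 + δ⁻¹ * phiP P (x / δ))

section Weight

variable {a β δ : ℝ}

lemma exp_abs_sub_mul_layerWeight_le (hβ : 0 ≤ β) (hβa : β ≤ a) (hδ : 0 ≤ δ) {x : ℝ}
    (hx : 0 ≤ x) (w : ℝ) :
    exp (-a * |x - w|) * layerWeight β δ P x ≤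
      exp (-β * w) * (exp (-(a - β) * |x - w|) + δ⁻¹ * phiP P (x / δ)) := by
  have hshift :
      exp (-a * |x - w|) * exp (-β * x) ≤ exp (-β * w) * exp (-(a - β) * |x - w|) := by
    rw [← exp_add, ← exp_add, exp_le_exp]
    nlinarith [mul_le_mul_of_nonneg_left (neg_abs_le (x - w)) hβ]
  have hdecay : exp (-(a - β) * |x - w|) ≤ 1 :=
    exp_le_one_iff.2 (mul_nonpos_of_nonpos_of_nonneg (by linarith) (abs_nonneg _))
  have hq : 0 ≤ δ⁻¹ * phiP P (x / δ) :=
    mul_nonneg (inv_nonneg.2 hδ) (phiP_pos (by positivity)).le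
  calc exp (-a * |x - w|) * layerWeight β δ P x
      = exp (-a * |x - w|) * exp (-β * x) * (1 + δ⁻¹ * phiP P (x / δ)) := by
        rw [layerWeight, mul_assoc]
    _ ≤ exp (-β * w) * exp (-(a - β) * |x - w|) * (1 + δ⁻¹ * phiP P (x / δ)) := by gcongr
    _ ≤ exp (-β * w) * (exp (-(a - β) * |x - w|) + δ⁻¹ * phiP P (x / δ)) := by
        rw [mul_assoc]
        gcongr
        nlinarith

lemma integrableOn_layerWeight (hβ : 0 < β) (hP : 1 < P) (hδ : 0 < δ) :
    IntegrableOn (layerWeight β δ P) (Ioi 0) := by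
  have hexp : IntegrableOn (fun x => exp (-β * x)) (Ioi 0) := by
    simpa using exp_neg_integrableOn_Ioi 0 hβ
  have hbdd : ∀ᵐ x ∂volume.restrict (Ioi (0:ℝ)), ‖exp (-β * x)‖ ≤ 1 :=
    (ae_restrict_iff' measurableSet_Ioi).2 <| .of_forall fun x hx => by
      rw [norm_of_nonneg (exp_pos _).le, exp_le_one_iff]
      nlinarith [mem_Ioi.1 hx]
  have hprod := ((integrableOn_phiP_div hP hδ).const_mul δ⁻¹).bdd_mul
    (by fun_prop : Continuous fun x => exp (-β * x)).aestronglyMeasurable hbdd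
  refine (hexp.add hprod).congr_fun (fun x _ => ?_) measurableSet_Ioi
  simp only [Pi.add_apply, layerWeight]
  ring

lemma integrableOn_exp_abs_sub_mul_layerWeight (ha : 0 ≤ a) (hβ : 0 < β) (hP : 1 < P)
    (hδ : 0 < δ) (w : ℝ) :
    IntegrableOn (fun x => exp (-a * |x - w|) * layerWeight β δ P x) (Ioi 0) :=
  (integrableOn_layerWeight hβ hP hδ).bdd_mul
    (by fun_prop : Continuous fun x => exp (-a * |x - w|)).aestronglyMeasurable
    (.of_forall fun x => by
      rw [norm_of_nonneg (exp_pos _).le, exp_le_one_iff]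
      exact mul_nonpos_of_nonpos_of_nonneg (neg_nonpos.2 ha) (abs_nonneg _))

theorem integral_exp_abs_sub_mul_layerWeight_le (hβ : 0 < β) (hβa : β < a) (hP : 1 < P)
    (hδ : 0 < δ) (w : ℝ) :
    ∫ x in Ioi 0, exp (-a * |x - w|) * layerWeight β δ P x ≤
      exp (-β * w) * (2 / (a - β) + ∫ y in Ioi 0, phiP P y) := by
  have hc : 0 < a - β := sub_pos.2 hβa
  have hexp := (integrable_exp_neg_mul_abs_sub hc w).integrableOn (s := Ioi 0)
  have hphi := (integrableOn_phiP_div hP hδ).const_mul δ⁻¹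
  calc ∫ x in Ioi 0, exp (-a * |x - w|) * layerWeight β δ P x
      ≤ ∫ x in Ioi 0, exp (-β * w) * (exp (-(a - β) * |x - w|) + δ⁻¹ * phiP P (x / δ)) :=
        setIntegral_mono_on
          (integrableOn_exp_abs_sub_mul_layerWeight (hβ.le.trans hβa.le) hβ hP hδ w)
          ((hexp.add hphi).const_mul _) measurableSet_Ioi
          fun x hx => exp_abs_sub_mul_layerWeight_le hβ.le hβa.le hδ.le (mem_Ioi.1 hx).le w
    _ = exp (-β * w) *
          ((∫ x in Ioi 0, exp (-(a - β) * |x - w|)) + ∫ y in Ioi 0, phiP P y) := by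
        rw [integral_const_mul, integral_add hexp hphi, integral_inv_mul_phiP_div hδ]
    _ ≤ exp (-β * w) * (2 / (a - β) + ∫ y in Ioi 0, phiP P y) := by
        gcongr
        exact setIntegral_exp_neg_mul_abs_sub_le hc w

end Weight

noncomputable def greenKernel (a w x : ℝ) : ℝ := exp (-a * |x - w|) - exp (-a * (x + w))

-- At `x = w` (a null set) the value is the junk `Real.sign 0 = 0`.
noncomputable def greenKernelDeriv (a w x : ℝ) : ℝ :=
  a * (Real.sign (x - w) * exp (-a * |x - w|) + exp (-a * (x + w)))

section Kernel

variable {a w x : ℝ}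

lemma exp_neg_mul_add_le (ha : 0 ≤ a) (hx : 0 ≤ x) (hw : 0 ≤ w) :
    exp (-a * (x + w)) ≤ exp (-a * |x - w|) :=
  exp_le_exp.2 <| by nlinarith [abs_sub_le_iff.2 (⟨by linarith, by linarith⟩ :
    x - w ≤ x + w ∧ w - x ≤ x + w)]

lemma abs_greenKernel_le (ha : 0 ≤ a) (hx : 0 ≤ x) (hw : 0 ≤ w) :
    |greenKernel a w x| ≤ exp (-a * |x - w|) := by
  rw [greenKernel, abs_of_nonneg (sub_nonneg.2 (exp_neg_mul_add_le ha hx hw))]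
  linarith [exp_pos (-a * (x + w))]

lemma greenKernel_zero_left (hx : 0 ≤ x) : greenKernel a 0 x = 0 := by
  simp [greenKernel, abs_of_nonneg hx]

lemma greenKernel_ne_zero (ha : 0 < a) (hx : 0 < x) (hw : w ≠ 0) : greenKernel a w x ≠ 0 := by
  rw [greenKernel, sub_ne_zero, Ne, exp_eq_exp, mul_right_inj' (neg_ne_zero.2 ha.ne')]
  intro h
  have : (x - w) ^ 2 = (x + w) ^ 2 := by rw [← sq_abs, h]
  exact hw (by nlinarith)

lemma abs_greenKernel_sub_le (ha : 0 ≤ a) (hx : 0 ≤ x) {w₁ w₂ : ℝ} (h₁ : -1 ≤ w₁)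
    (h₂ : -1 ≤ w₂) :
    |greenKernel a w₁ x - greenKernel a w₂ x| ≤ 2 * a * exp a * |w₁ - w₂| := by
  have hreflected :
      |exp (-a * |x - w₁|) - exp (-a * |x - w₂|)| ≤ exp a * (a * |w₁ - w₂|) := by
    refine (Real.abs_exp_sub_exp_le (by nlinarith [abs_nonneg (x - w₁)])
      (by nlinarith [abs_nonneg (x - w₂)])).trans (mul_le_mul_of_nonneg_left ?_ (exp_pos a).le)
    rw [← mul_sub, abs_mul, abs_neg, abs_of_nonneg ha]
    refine mul_le_mul_of_nonneg_left ?_ ha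
    simpa [abs_sub_comm w₂] using abs_abs_sub_abs_le_abs_sub (x - w₁) (x - w₂)
  have hdirect :
      |exp (-a * (x + w₁)) - exp (-a * (x + w₂))| ≤ exp a * (a * |w₁ - w₂|) := by
    refine (Real.abs_exp_sub_exp_le (c := a) (by nlinarith) (by nlinarith)).trans (le_of_eq ?_)
    rw [← mul_sub, abs_mul, abs_neg, abs_of_nonneg ha, add_sub_add_left_eq_sub]
  calc |greenKernel a w₁ x - greenKernel a w₂ x|
      ≤ |exp (-a * |x - w₁|) - exp (-a * |x - w₂|)|
          + |exp (-a * (x + w₁)) - exp (-a * (x + w₂))| := by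
        rw [greenKernel, greenKernel, sub_sub_sub_comm]; exact abs_sub _ _
    _ ≤ 2 * a * exp a * |w₁ - w₂| := by linarith

lemma hasDerivAt_greenKernel (hxw : x ≠ w) :
    HasDerivAt (fun w => greenKernel a w x) (greenKernelDeriv a w x) w := by
  have habs : HasDerivAt (fun w => |x - w|) (-Real.sign (x - w)) w := by
    have hsub := (hasDerivAt_id w).const_sub x
    rcases (sub_ne_zero.2 hxw).lt_or_gt with h | h
    · simpa [Function.comp_def, Real.sign_of_neg h] using (hasDerivAt_abs_neg h).comp w hsub
    · simpa [Function.comp_def, Real.sign_of_pos h] using (hasDerivAt_abs_pos h).comp w hsub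
  refine (((habs.const_mul (-a)).exp).fun_sub
    (((hasDerivAt_id' w).const_add x).const_mul (-a)).exp).congr_deriv ?_
  simp only [greenKernelDeriv]
  ring

lemma abs_greenKernelDeriv_le (ha : 0 ≤ a) (hx : 0 ≤ x) (hw : 0 ≤ w) :
    |greenKernelDeriv a w x| ≤ 2 * a * exp (-a * |x - w|) := by
  have hsign : |Real.sign (x - w)| ≤ 1 := by
    rcases Real.sign_apply_eq (x - w) with h | h | h <;> simp [h]
  calc |greenKernelDeriv a w x|
      = a * |Real.sign (x - w) * exp (-a * |x - w|) + exp (-a * (x + w))| := by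
        rw [greenKernelDeriv, abs_mul, abs_of_nonneg ha]
    _ ≤ a * (1 * exp (-a * |x - w|) + exp (-a * |x - w|)) := by
        refine mul_le_mul_of_nonneg_left ((abs_add_le _ _).trans (add_le_add ?_ ?_)) ha
        · rw [abs_mul, abs_of_pos (exp_pos _)]; gcongr
        · rw [abs_of_pos (exp_pos _)]; exact exp_neg_mul_add_le ha hx hw
    _ = 2 * a * exp (-a * |x - w|) := by ring

lemma measurable_greenKernelDeriv : Measurable (greenKernelDeriv a w) := by
  unfold greenKernelDeriv
  have := Real.measurable_sign.comp (measurable_id.sub_const w)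
  fun_prop

lemma continuous_greenKernel : Continuous (greenKernel a w) := by
  unfold greenKernel; fun_prop

end Kernel

section GreenIntegral

variable {E : Type*} [NormedAddCommGroup E] [NormedSpace ℝ E] {f : ℝ → E} {a β δ P M : ℝ}

noncomputable def greenIntegral (a : ℝ) (f : ℝ → E) (w : ℝ) : E :=
  ∫ x in Ioi 0, greenKernel a w x • f x

theorem norm_setIntegral_smul_mul_exp_le (hβ : 0 < β) (hβa : β < a) (hP : 1 < P) (hδ : 0 < δ)
    (hM : 0 ≤ M) (hf : ∀ x, 0 < x → ‖f x‖ ≤ M * layerWeight β δ P x) {k : ℝ → ℝ}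
    {C w : ℝ} (hC : 0 ≤ C) (hk : ∀ x, 0 < x → |k x| ≤ C * exp (-a * |x - w|)) :
    ‖∫ x in Ioi 0, k x • f x‖ * exp (β * w) ≤
      C * M * (2 / (a - β) + ∫ y in Ioi 0, phiP P y) := by
  have hg := (integrableOn_exp_abs_sub_mul_layerWeight (hβ.le.trans hβa.le) hβ hP hδ
    w).const_mul (C * M)
  have hnorm : ‖∫ x in Ioi 0, k x • f x‖ ≤
      ∫ x in Ioi 0, C * M * (exp (-a * |x - w|) * layerWeight β δ P x) :=
    norm_integral_le_of_norm_le hg <| (ae_restrict_iff' measurableSet_Ioi).2 <|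
      .of_forall fun x hx => by
        rw [norm_smul, Real.norm_eq_abs]
        calc |k x| * ‖f x‖ ≤ C * exp (-a * |x - w|) * (M * layerWeight β δ P x) :=
              mul_le_mul (hk x hx) (hf x hx) (norm_nonneg _) (by positivity)
          _ = C * M * (exp (-a * |x - w|) * layerWeight β δ P x) := by ring
  calc ‖∫ x in Ioi 0, k x • f x‖ * exp (β * w)
      ≤ C * M * (∫ x in Ioi 0, exp (-a * |x - w|) * layerWeight β δ P x) * exp (β * w) := by
        rw [← integral_const_mul]; gcongr
    _ ≤ C * M * (exp (-β * w) * (2 / (a - β) + ∫ y in Ioi 0, phiP P y)) * exp (β * w) := by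
        gcongr
        exact integral_exp_abs_sub_mul_layerWeight_le hβ hβa hP hδ w
    _ = C * M * (2 / (a - β) + ∫ y in Ioi 0, phiP P y) := by
        rw [mul_assoc, mul_right_comm (exp _), ← exp_add]; simp

theorem norm_greenIntegral_mul_exp_le (hβ : 0 < β) (hβa : β < a) (hP : 1 < P) (hδ : 0 < δ)
    (hM : 0 ≤ M) (hf : ∀ x, 0 < x → ‖f x‖ ≤ M * layerWeight β δ P x) {w : ℝ}
    (hw : 0 ≤ w) :
    ‖greenIntegral a f w‖ * exp (β * w) ≤ M * (2 / (a - β) + ∫ y in Ioi 0, phiP P y) := by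
  rw [greenIntegral]
  simpa using norm_setIntegral_smul_mul_exp_le hβ hβa hP hδ hM hf zero_le_one
    fun x hx => by simpa using abs_greenKernel_le (hβ.le.trans hβa.le) hx.le hw

theorem hasDerivAt_greenIntegral (ha : 0 ≤ a) (hf : IntegrableOn f (Ioi 0)) {z : ℝ}
    (hz : 0 ≤ z) :
    HasDerivAt (greenIntegral a f) (∫ x in Ioi 0, greenKernelDeriv a z x • f x) z := by
  have hmeas : ∀ w,
      AEStronglyMeasurable (fun x => greenKernel a w x • f x) (volume.restrict (Ioi 0)) :=
    fun w => continuous_greenKernel.aestronglyMeasurable.smul hf.aestronglyMeasurable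
  have hint : IntegrableOn (fun x => greenKernel a z x • f x) (Ioi 0) :=
    hf.bdd_smul 1 continuous_greenKernel.aestronglyMeasurable <|
      (ae_restrict_iff' measurableSet_Ioi).2 <| .of_forall fun x hx => by
        rw [Real.norm_eq_abs]
        exact (abs_greenKernel_le ha (mem_Ioi.1 hx).le hz).trans
          (exp_le_one_iff.2 (mul_nonpos_of_nonpos_of_nonneg (neg_nonpos.2 ha) (abs_nonneg _)))
  have hlip : ∀ᵐ x ∂volume.restrict (Ioi 0),
      LipschitzOnWith (Real.nnabs (2 * a * exp a * ‖f x‖))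
        (fun w => greenKernel a w x • f x) (Ioi (-1)) :=
    (ae_restrict_iff' measurableSet_Ioi).2 <| .of_forall fun x hx =>
      LipschitzOnWith.of_dist_le_mul fun w₁ h₁ w₂ h₂ => by
        rw [dist_eq_norm, ← sub_smul, norm_smul, Real.norm_eq_abs, Real.coe_nnabs,
          abs_of_nonneg (by positivity : 0 ≤ 2 * a * exp a * ‖f x‖), Real.dist_eq]
        calc |greenKernel a w₁ x - greenKernel a w₂ x| * ‖f x‖
            ≤ 2 * a * exp a * |w₁ - w₂| * ‖f x‖ := by
              gcongr
              exact abs_greenKernel_sub_le ha (mem_Ioi.1 hx).le (mem_Ioi.1 h₁).le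
                (mem_Ioi.1 h₂).le
          _ = 2 * a * exp a * ‖f x‖ * |w₁ - w₂| := by ring
  have hdiff : ∀ᵐ x ∂volume.restrict (Ioi 0),
      HasDerivAt (fun w => greenKernel a w x • f x) (greenKernelDeriv a z x • f x) z :=
    (ae_restrict_of_ae (compl_mem_ae_iff.2 (measure_singleton z))).mono fun x hx =>
      (hasDerivAt_greenKernel hx).smul_const (f x)
  exact (hasDerivAt_integral_of_dominated_loc_of_lip (Ioi_mem_nhds (by linarith))
    (.of_forall hmeas) hint (measurable_greenKernelDeriv.aestronglyMeasurable.smul hf.1) hlip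
    (hf.norm.const_mul _) hdiff).2

theorem greenIntegral_eq_zero_of_not_aestronglyMeasurable (ha : 0 < a)
    (hf : ¬ AEStronglyMeasurable f (volume.restrict (Ioi 0))) : greenIntegral a f = 0 := by
  funext w
  rcases eq_or_ne w 0 with rfl | hw
  · exact setIntegral_eq_zero_of_forall_eq_zero fun x hx => by
      rw [greenKernel_zero_left (mem_Ioi.1 hx).le, zero_smul]
  · refine integral_undef fun hint => hf ?_
    refine ((continuous_greenKernel (a := a) (w := w)).measurable.inv.aestronglyMeasurable.smul
      hint.1).congr ?_
    refine (ae_restrict_iff' measurableSet_Ioi).2 <| .of_forall fun x hx => ?_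
    simp only [Pi.smul_apply', Pi.inv_apply, smul_smul,
      inv_mul_cancel₀ (greenKernel_ne_zero ha hx hw), one_smul]

theorem norm_deriv_greenIntegral_mul_exp_le (hβ : 0 < β) (hβa : β < a) (hP : 1 < P)
    (hδ : 0 < δ) (hM : 0 ≤ M) (hf : ∀ x, 0 < x → ‖f x‖ ≤ M * layerWeight β δ P x)
    {z : ℝ} (hz : 0 ≤ z) :
    ‖deriv (greenIntegral a f) z‖ * exp (β * z) ≤
      2 * a * M * (2 / (a - β) + ∫ y in Ioi 0, phiP P y) := by
  have ha : 0 < a := hβ.trans hβa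
  by_cases hfm : AEStronglyMeasurable f (volume.restrict (Ioi 0))
  · have hfi : IntegrableOn f (Ioi 0) :=
      ((integrableOn_layerWeight hβ hP hδ).const_mul M).mono' hfm
        ((ae_restrict_iff' measurableSet_Ioi).2 (.of_forall hf))
    rw [(hasDerivAt_greenIntegral ha.le hfi hz).deriv]
    exact norm_setIntegral_smul_mul_exp_le hβ hβa hP hδ hM hf (by positivity)
      fun x hx => abs_greenKernelDeriv_le ha.le hx.le hz
  · -- all the integrals defining `greenIntegral a f` are junk `0`
    have hc : 0 < a - β := sub_pos.2 hβa
    have hCp : 0 ≤ ∫ y in Ioi 0, phiP P y := setIntegral_phiP_nonneg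
    rw [greenIntegral_eq_zero_of_not_aestronglyMeasurable ha hfm, Pi.zero_def, deriv_const',
      norm_zero, zero_mul]
    positivity

end GreenIntegral

end HalfLineGreen

open HalfLineGreen

/-- Inversion of `∂_z² - α²` on the half line with boundary layer data: for
`β ∈ (0,1/2)` and `P > 1` there is a constant `C`, independent of the nonzero
integer `α` and of `δ > 0`, such that if
`|f(z)| ≤ M e^{-βz}(1 + δ⁻¹ φ_P(δ⁻¹ z))` with `φ_P(y) = 1/(1+y^P)`, then the
solution `φ(z) = -(1/(2|α|)) ∫₀^∞ (e^{-|α||x-z|} - e^{-|α|(x+z)}) f(x) dx`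
of `φ'' - α²φ = f`, `φ(0) = 0`, satisfies
`|α| sup_{z≥0} |φ(z)|e^{βz} + sup_{z≥0} |φ'(z)|e^{βz} ≤ C M`. -/
theorem laplace_inverse_bl (β P : ℝ) (hβ0 : 0 < β) (hβ : β < 1/2) (hP : 1 < P) :
    ∃ C : ℝ, 0 < C ∧ ∀ δ : ℝ, 0 < δ → ∀ (α : ℤ), α ≠ 0 →
      ∀ (M : ℝ) (f : ℝ → ℂ), 0 ≤ M →
      (∀ z, 0 ≤ z →
        ‖f z‖ ≤ M * Real.exp (-β * z) * (1 + δ⁻¹ * (1 + (z/δ) ^ P)⁻¹)) →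
      ∀ φ : ℝ → ℂ,
        (φ = fun z => -(1 / (2 * |(α : ℝ)|) : ℝ) •
          ∫ x in Set.Ioi (0 : ℝ),
            (Real.exp (-|(α : ℝ)| * |x - z|) - Real.exp (-|(α : ℝ)| * (x + z))) • f x) →
        ∀ z z', 0 ≤ z → 0 ≤ z' →
          |(α : ℝ)| * ‖φ z‖ * Real.exp (β * z)
            + ‖deriv φ z'‖ * Real.exp (β * z') ≤ C * M := by
  set Cp := ∫ y in Ioi 0, phiP P y
  have hCp : 0 ≤ Cp := setIntegral_phiP_nonneg
  refine ⟨3 / 2 * (4 + Cp), by positivity, fun δ hδ α hα M f hM hf φ hφ z z' hz hz' => ?_⟩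
  set a := |(α : ℝ)|
  have ha : 1 ≤ a := by
    rw [show a = ((|α| : ℤ) : ℝ) from Int.cast_abs.symm]; exact_mod_cast Int.one_le_abs hα
  have hβa : β < a := by linarith
  have hdecay : 2 / (a - β) ≤ 4 := by rw [div_le_iff₀ (by linarith)]; linarith
  have hf' : ∀ x, 0 < x → ‖f x‖ ≤ M * layerWeight β δ P x := fun x hx => by
    simpa [layerWeight, phiP, mul_assoc] using hf x hx.le
  have hval := norm_greenIntegral_mul_exp_le hβ0 hβa hP hδ hM hf' hz
  have hder := norm_deriv_greenIntegral_mul_exp_le hβ0 hβa hP hδ hM hf' hz'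
  rw [show φ = fun z => (-(1 / (2 * a)) : ℝ) • greenIntegral a f z from hφ,
    deriv_fun_const_smul_field, norm_smul, norm_smul, norm_neg,
    Real.norm_of_nonneg (by positivity)]
  calc a * (1 / (2 * a) * ‖greenIntegral a f z‖) * exp (β * z)
        + 1 / (2 * a) * ‖deriv (greenIntegral a f) z'‖ * exp (β * z')
      = 1 / 2 * (‖greenIntegral a f z‖ * exp (β * z))
        + 1 / (2 * a) * (‖deriv (greenIntegral a f) z'‖ * exp (β * z')) := by
        field_simp
    _ ≤ 1 / 2 * (M * (2 / (a - β) + Cp))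
        + 1 / (2 * a) * (2 * a * M * (2 / (a - β) + Cp)) := by
        gcongr
    _ ≤ 3 / 2 * (4 + Cp) * M := by
        field_simp
        nlinarith
end

section
/- Let μ > 0, δ > 0, P > 1, q ≥ 1 with μδ ≥ 1, and let φ_s(z) = 1/(1+z^s). Then there is a constant C₀ (depending only on P, q) such that for all z ≥ 0, ∫_0^∞ μ e^{-μ|x-z|} φ_{P-1+q}(δ^{-1}x) dx ≤ C₀ φ_{P-1+q}(δ^{-1}z). -/
/-!
Split the integral at `x = z / 2`. For `x ≥ z / 2` the weight doubles at worst: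
`φ_s(x/δ) ≤ 2^s φ_s(z/δ)`. For `x < z / 2` we have `|x - z| ≥ z / 2`, so half of the kernel's
decay is at most `e^{-μz/4}`; as `e^{-t/4}` beats every power of `t` and `z/δ ≤ μz` when
`μδ ≥ 1`, this is `≤ C φ_s(z/δ)`. Either way the integrand is bounded by a constant times
`φ_s(z/δ)` times the kernel `μ e^{-μ|x-z|/2}`, whose integral over `ℝ` is `4`.
-/

open Real Set Filter MeasureTheory

noncomputable def boundaryLayerWeight (s y : ℝ) : ℝ := (1 + y ^ s)⁻¹

namespace boundaryLayerWeight

variable {s x y : ℝ}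

theorem pos (hy : 0 ≤ y) : 0 < boundaryLayerWeight s y := by
  unfold boundaryLayerWeight; positivity

theorem le_one (hy : 0 ≤ y) : boundaryLayerWeight s y ≤ 1 :=
  inv_le_one_of_one_le₀ (le_add_of_nonneg_right (rpow_nonneg hy s))

theorem anti (hs : 0 ≤ s) (hx : 0 ≤ x) (hxy : x ≤ y) :
    boundaryLayerWeight s y ≤ boundaryLayerWeight s x := by
  unfold boundaryLayerWeight
  gcongr

theorem le_two_rpow_mul (hs : 0 ≤ s) (hx : 0 ≤ x) (hy : 0 ≤ y) (hyx : y ≤ 2 * x) :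
    boundaryLayerWeight s x ≤ 2 ^ s * boundaryLayerWeight s y := by
  unfold boundaryLayerWeight
  rw [← div_eq_mul_inv, le_div_iff₀ (by positivity), inv_mul_le_iff₀ (by positivity)]
  have hpow : y ^ s ≤ 2 ^ s * x ^ s := by
    rw [← mul_rpow zero_le_two hx]; exact rpow_le_rpow hy hyx hs
  nlinarith [one_le_rpow one_le_two hs, rpow_nonneg hx s]

end boundaryLayerWeight

theorem integral_exp_neg_mul_abs_sub {b : ℝ} (hb : 0 < b) (z : ℝ) :
    ∫ x, exp (-(b * |x - z|)) = 2 / b := by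
  rw [integral_sub_right_eq_self (fun x => exp (-(b * |x|))) z,
    integral_comp_abs (f := fun x => exp (-(b * x)))]
  simp_rw [← neg_mul]
  rw [integral_exp_mul_Ioi (neg_lt_zero.2 hb), mul_zero, exp_zero]
  field_simp

theorem integrable_exp_neg_mul_abs_sub {b : ℝ} (hb : 0 < b) (z : ℝ) :
    Integrable fun x => exp (-(b * |x - z|)) :=
  .of_integral_ne_zero (by rw [integral_exp_neg_mul_abs_sub hb]; positivity)

theorem exists_rpow_le_add_exp {s b : ℝ} (hs : 0 ≤ s) (hb : 0 < b) :
    ∃ A, 0 ≤ A ∧ ∀ t, 0 ≤ t → t ^ s ≤ A + exp (b * t) := by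
  obtain ⟨R, hR⟩ := eventually_atTop.1 ((isLittleO_rpow_exp_pos_mul_atTop s hb).bound one_pos)
  refine ⟨max R 0 ^ s, by positivity, fun t ht => ?_⟩
  rcases le_total R t with hRt | htR
  · have := hR t hRt
    rw [one_mul, norm_of_nonneg (by positivity), norm_of_nonneg (by positivity)] at this
    linarith [rpow_nonneg (le_max_right R 0) s]
  · linarith [rpow_le_rpow ht (htR.trans (le_max_left R 0)) hs, exp_pos (b * t)]

theorem exists_exp_neg_mul_le_mul_boundaryLayerWeight {s b : ℝ} (hs : 0 ≤ s) (hb : 0 < b) :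
    ∃ C, 0 < C ∧ ∀ t, 0 ≤ t → exp (-(b * t)) ≤ C * boundaryLayerWeight s t := by
  obtain ⟨A, hA, hle⟩ := exists_rpow_le_add_exp hs hb
  refine ⟨A + 2, by positivity, fun t ht => ?_⟩
  rw [boundaryLayerWeight, ← div_eq_mul_inv, le_div_iff₀ (by positivity)]
  have hexp : exp (-(b * t)) * exp (b * t) = 1 := by rw [← exp_add, neg_add_cancel, exp_zero]
  have hexp_le : exp (-(b * t)) ≤ 1 := exp_le_one_iff.2 (by nlinarith)
  nlinarith [hle t ht, exp_pos (-(b * t))]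

section ExpKernel

variable {s C μ δ z : ℝ}

theorem exp_neg_mul_abs_mul_boundaryLayerWeight_le (hs : 0 ≤ s) (hC0 : 0 ≤ C)
    (hC : ∀ t, 0 ≤ t → exp (-(1 / 4 * t)) ≤ C * boundaryLayerWeight s t)
    (hμ : 0 < μ) (hδ : 0 < δ) (hμδ : 1 ≤ μ * δ) (hz : 0 ≤ z) {x : ℝ} (hx : 0 ≤ x) :
    exp (-μ * |x - z|) * boundaryLayerWeight s (x / δ) ≤
      (2 ^ s + C) * boundaryLayerWeight s (z / δ) * exp (-(μ / 2 * |x - z|)) := by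
  set e := exp (-(μ / 2 * |x - z|))
  have he : 0 < e := exp_pos _
  have he_le_one : e ≤ 1 := exp_le_one_iff.2 (by nlinarith [abs_nonneg (x - z)])
  have hsplit : exp (-μ * |x - z|) = e * e := by rw [← exp_add]; ring_nf
  have hwx := boundaryLayerWeight.pos (s := s) (div_nonneg hx hδ.le)
  have hwz := boundaryLayerWeight.pos (s := s) (div_nonneg hz hδ.le)
  have h2s : 1 ≤ (2 : ℝ) ^ s := one_le_rpow one_le_two hs
  rw [hsplit]
  rcases le_or_gt z (2 * x) with hzx | hxz
  · have hw : boundaryLayerWeight s (x / δ) ≤ 2 ^ s * boundaryLayerWeight s (z / δ) :=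
      boundaryLayerWeight.le_two_rpow_mul hs (div_nonneg hx hδ.le) (div_nonneg hz hδ.le)
        (by rw [mul_div_assoc']; gcongr)
    calc e * e * boundaryLayerWeight s (x / δ)
        ≤ e * (2 ^ s * boundaryLayerWeight s (z / δ)) := by
          gcongr; exact mul_le_of_le_one_left he.le he_le_one
      _ ≤ _ := by nlinarith [mul_nonneg hC0 hwz.le]
  · have hdist : z / 2 ≤ |x - z| := by rw [abs_sub_comm, abs_of_pos (by linarith)]; linarith
    have hzδ : z / δ ≤ μ * z := by rw [div_le_iff₀ hδ]; nlinarith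
    have htail : e ≤ C * boundaryLayerWeight s (z / δ) :=
      calc e ≤ exp (-(1 / 4 * (μ * z))) := exp_le_exp.2 (by nlinarith)
        _ ≤ C * boundaryLayerWeight s (μ * z) := hC _ (by positivity)
        _ ≤ C * boundaryLayerWeight s (z / δ) := by
          gcongr; exact boundaryLayerWeight.anti hs (div_nonneg hz hδ.le) hzδ
    calc e * e * boundaryLayerWeight s (x / δ)
        ≤ e * (C * boundaryLayerWeight s (z / δ)) := by
          have := boundaryLayerWeight.le_one (s := s) (div_nonneg hx hδ.le)
          nlinarith
      _ ≤ _ := by nlinarith [mul_pos (mul_pos he hwz) (by linarith : (0 : ℝ) < 2 ^ s)]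

theorem setIntegral_exp_kernel_mul_boundaryLayerWeight_le (hs : 0 ≤ s) (hC0 : 0 ≤ C)
    (hC : ∀ t, 0 ≤ t → exp (-(1 / 4 * t)) ≤ C * boundaryLayerWeight s t)
    (hμ : 0 < μ) (hδ : 0 < δ) (hμδ : 1 ≤ μ * δ) (hz : 0 ≤ z) :
    ∫ x in Ioi 0, μ * exp (-μ * |x - z|) * boundaryLayerWeight s (x / δ) ≤
      4 * (2 ^ s + C) * boundaryLayerWeight s (z / δ) := by
  have hwz := boundaryLayerWeight.pos (s := s) (div_nonneg hz hδ.le)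
  have hbound : Integrable fun x =>
      μ * ((2 ^ s + C) * boundaryLayerWeight s (z / δ) * exp (-(μ / 2 * |x - z|))) :=
    ((integrable_exp_neg_mul_abs_sub (half_pos hμ) z).const_mul _).const_mul μ
  calc ∫ x in Ioi 0, μ * exp (-μ * |x - z|) * boundaryLayerWeight s (x / δ)
      ≤ ∫ x in Ioi 0,
          μ * ((2 ^ s + C) * boundaryLayerWeight s (z / δ) * exp (-(μ / 2 * |x - z|))) := by
        refine integral_mono_of_nonneg ?_ hbound.integrableOn ?_
        · refine (ae_restrict_iff' measurableSet_Ioi).2 (.of_forall fun x hx => ?_)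
          have := boundaryLayerWeight.pos (s := s) (div_nonneg (le_of_lt hx) hδ.le)
          positivity
        · refine (ae_restrict_iff' measurableSet_Ioi).2 (.of_forall fun x hx => ?_)
          dsimp only
          rw [mul_assoc]
          exact mul_le_mul_of_nonneg_left (exp_neg_mul_abs_mul_boundaryLayerWeight_le hs hC0 hC
            hμ hδ hμδ hz (le_of_lt hx)) hμ.le
    _ ≤ ∫ x, μ * ((2 ^ s + C) * boundaryLayerWeight s (z / δ) * exp (-(μ / 2 * |x - z|))) :=
        setIntegral_le_integral hbound (.of_forall fun x => by positivity)
    _ = 4 * (2 ^ s + C) * boundaryLayerWeight s (z / δ) := by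
        rw [integral_const_mul, integral_const_mul, integral_exp_neg_mul_abs_sub (half_pos hμ)]
        field_simp
        ring

end ExpKernel

/-- Convolution with a fast exponential kernel preserves the boundary layer
weight: for `P > 1`, `q ≥ 1` there is `C₀ > 0` (depending only on `P, q`) such
that for `μ, δ > 0` with `μδ ≥ 1` and all `z ≥ 0`,
`∫₀^∞ μ e^{-μ|x-z|} φ_{P-1+q}(δ⁻¹x) dx ≤ C₀ φ_{P-1+q}(δ⁻¹z)`,
where `φ_s(y) = 1/(1+y^s)`. -/
theorem exp_kernel_preserves_bl (P q : ℝ) (hP : 1 < P) (hq : 1 ≤ q) :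
    ∃ C₀ : ℝ, 0 < C₀ ∧ ∀ μ δ : ℝ, 0 < μ → 0 < δ → 1 ≤ μ * δ → ∀ z : ℝ, 0 ≤ z →
      (∫ x in Set.Ioi (0 : ℝ),
          μ * Real.exp (-μ * |x - z|) * (1 + (x/δ) ^ (P - 1 + q))⁻¹)
        ≤ C₀ * (1 + (z/δ) ^ (P - 1 + q))⁻¹ := by
  have hs : 0 ≤ P - 1 + q := by linarith
  obtain ⟨C, hC0, hC⟩ :=
    exists_exp_neg_mul_le_mul_boundaryLayerWeight (b := 1 / 4) hs (by norm_num)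
  exact ⟨4 * (2 ^ (P - 1 + q) + C), by positivity, fun μ δ hμ hδ hμδ z hz =>
    setIntegral_exp_kernel_mul_boundaryLayerWeight_le hs hC0.le hC hμ hδ hμδ hz⟩
end
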